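/- arXiv:math/0211040 — 5 statements merged into one kernel-verified Lean document; each statement's English description precedes it below -/
import Mathlib

section
/- If F is a finite field whose characteristic does not divide n, and C is a direct summand of F[z]^n that is invariant under the cyclic shift (v_0,...,v_{n-1}) ↦ (v_{n-1},v_0,...,v_{n-2}) applied coefficientwise, then C has a constant generator matrix; i.e., C is generated as an F[z]-module by C ∩ F^n. -/
/-!
Averaging a projection onto `C` over the cyclic group of shifts (possible since `n` is invertible
in `F`) gives a projection `T` onto `C` that commutes with the shifts. Such a `T` is multiplication
by a circulant matrix with entries in `F[z]`, and this matrix is idempotent. Its coefficient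
matrices are circulant over `F`, hence commute with each other, and an idempotent polynomial whose
coefficients commute is constant. So `T` is a constant matrix, and `C`, the span of the columns of
`T`, is spanned by constant vectors of `C`.
-/

open Polynomial

namespace Polynomial

theorem eq_C_coeff_zero_of_isIdempotentElem {A : Type*} [Ring A] {q : A[X]}
    (hq : IsIdempotentElem q) (hcomm : ∀ k, Commute (q.coeff 0) (q.coeff k)) :
    q = C (q.coeff 0) := by
  set e := q.coeff 0
  have he : e * e = e := by simpa [mul_coeff_zero] using congrArg (coeff · 0) hq.eq
  have hpos : ∀ N, 0 < N → q.coeff N = 0 := by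
    intro N
    induction N using Nat.strong_induction_on with
    | _ N ih =>
      intro hN
      -- In the coefficient of `X ^ N` in `q * q`, only the two terms involving `e` survive.
      have hsq : q.coeff N = e * q.coeff N + q.coeff N * e := by
        conv_lhs => rw [← hq.eq, coeff_mul]
        refine Finset.sum_eq_add (0, N) (N, 0) (by simp [hN.ne']) (fun x hx hne => ?_)
          (by simp) (by simp)
        rw [Finset.HasAntidiagonal.mem_antidiagonal] at hx
        have h1 : 0 < x.1 := Nat.pos_of_ne_zero fun h => hne.1 (Prod.ext h (by omega))
        have h2 : x.1 < N := by
          have : x.2 ≠ 0 := fun h => hne.2 (Prod.ext (by omega) h)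
          omega
        rw [ih x.1 h2 h1, zero_mul]
      rw [← (hcomm N).eq] at hsq
      have hzero : e * q.coeff N = 0 := by
        have := congrArg (e * ·) hsq
        simp only [mul_add, ← mul_assoc, he] at this
        exact left_eq_add.mp this
      rw [hsq, hzero, add_zero]
  ext N
  rcases N.eq_zero_or_pos with rfl | hN
  · simp [e]
  · rw [hpos N hN, coeff_C, if_neg hN.ne']

end Polynomial

namespace Matrix

variable {R n : Type*} [CommRing R] [Fintype n] [DecidableEq n]

theorem eq_map_C_of_isIdempotentElem {M : Matrix n n R[X]} (hM : IsIdempotentElem M)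
    (hcomm : ∀ k, Commute (M.map (coeff · 0)) (M.map (coeff · k))) :
    M = (M.map (coeff · 0)).map C := by
  have hcoeff : ∀ k, (matPolyEquiv M).coeff k = M.map (coeff · k) := fun k => by
    ext i j; exact matPolyEquiv_coeff_apply M k i j
  have hconst := eq_C_coeff_zero_of_isIdempotentElem (hM.map matPolyEquiv)
    (by simpa only [hcoeff] using hcomm)
  calc M = matPolyEquiv.symm (matPolyEquiv M) := (matPolyEquiv.symm_apply_apply M).symm
    _ = (M.map (coeff · 0)).map C := by rw [hconst, matPolyEquiv_symm_C, hcoeff]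

theorem circulant_apply_eq_C_of_isIdempotentElem [AddCommGroup n] {p : n → R[X]}
    (hp : IsIdempotentElem (circulant p)) (i : n) : p i = C ((p i).coeff 0) := by
  have h := eq_map_C_of_isIdempotentElem hp fun k => by
    simp only [map_circulant]; exact circulant_mul_comm _ _
  simpa [map_circulant] using congrFun (congrFun h i) 0

end Matrix

namespace Representation

theorem exists_isProj_forall_commute {R G M : Type*} [CommRing R] [Group G] [Fintype G]
    [AddCommGroup M] [Module R M] (ρ : Representation R G M) (hG : IsUnit (Fintype.card G : R))
    {C : Submodule R M} (hC : ∀ g, C ≤ C.comap (ρ g)) {π : M →ₗ[R] M}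
    (hπ : LinearMap.IsProj C π) :
    ∃ T : M →ₗ[R] M, LinearMap.IsProj C T ∧ ∀ g, Commute T (ρ g) := by
  obtain ⟨u, hu⟩ := hG.exists_left_inv
  refine ⟨u • ∑ g, ρ g * π * ρ g⁻¹, ⟨fun v => ?_, fun v hv => ?_⟩, fun h => ?_⟩
  · simp only [LinearMap.smul_apply, LinearMap.sum_apply, Module.End.mul_apply]
    exact C.smul_mem _ (C.sum_mem fun g _ => hC g (hπ.map_mem _))
  · have hterm : ∀ g, (ρ g * π * ρ g⁻¹) v = v := fun g => by
      rw [Module.End.mul_apply, Module.End.mul_apply, hπ.map_id _ (hC g⁻¹ hv),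
        ← Module.End.mul_apply, ← map_mul, mul_inv_cancel, map_one, Module.End.one_apply]
    simp only [LinearMap.smul_apply, LinearMap.sum_apply, hterm, Finset.sum_const,
      Finset.card_univ, ← Nat.cast_smul_eq_nsmul R, smul_smul, hu, one_smul]
  · rw [Commute, SemiconjBy, smul_mul_assoc, mul_smul_comm, Finset.sum_mul, Finset.mul_sum]
    congr 1
    refine Fintype.sum_equiv (Equiv.mulLeft h⁻¹) _ _ fun g => ?_
    rw [Equiv.coe_mulLeft, ← mul_assoc, ← mul_assoc, ← map_mul, mul_inv_cancel_left,
      mul_inv_rev, inv_inv, map_mul, mul_assoc]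

def translation (R G : Type*) [CommSemiring R] [AddCommGroup G] :
    Representation R (Multiplicative G) (G → R) where
  toFun a := LinearMap.funLeft R R (· - a.toAdd)
  map_one' := by ext; simp
  map_mul' a b := by ext; simp [sub_sub]

variable {R : Type*} [CommSemiring R]

theorem translation_apply {G : Type*} [AddCommGroup G] (a : Multiplicative G) (v : G → R)
    (i : G) : translation R G a v i = v (i - a.toAdd) :=
  rfl

open Fin.NatCast in
theorem le_comap_translation_of_shift {n : ℕ} [NeZero n] {C : Submodule R (Fin n → R)}
    (hC : ∀ v ∈ C, (fun i : Fin n => v (i - 1)) ∈ C) (a : Multiplicative (Fin n)) :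
    C ≤ C.comap (translation R (Fin n) a) := by
  suffices h : ∀ k : ℕ, C ≤ C.comap (translation R (Fin n) (.ofAdd (k : Fin n))) by
    simpa using h a.toAdd.val
  intro k
  induction k with
  | zero =>
    rw [Nat.cast_zero, ofAdd_zero, map_one]
    exact fun _ hv => hv
  | succ k ih =>
    intro v hv
    rw [Nat.cast_succ, ofAdd_add, map_mul]
    exact ih (hC v hv)

theorem toMatrix'_eq_circulant {G : Type*} [AddCommGroup G] [Fintype G] [DecidableEq G]
    {T : (G → R) →ₗ[R] G → R} (hT : ∀ a, Commute T (translation R G a)) :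
    LinearMap.toMatrix' T = Matrix.circulant (T (Pi.single 0 1)) := by
  ext i j
  have hsingle : Pi.single j 1 = translation R G (.ofAdd j) (Pi.single 0 1) := by
    ext k
    simp [translation_apply, Pi.single_apply, sub_eq_zero]
  rw [LinearMap.toMatrix'_apply, hsingle, ← Module.End.mul_apply, (hT _).eq,
    Module.End.mul_apply, translation_apply, Matrix.circulant_apply, toAdd_ofAdd]

end Representation

theorem LinearMap.IsProj.eq_span_of_apply_single_mem {R ι : Type*} [CommSemiring R] [Fintype ι]
    [DecidableEq ι] {C : Submodule R (ι → R)} {T : (ι → R) →ₗ[R] ι → R}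
    (hT : LinearMap.IsProj C T) {s : Set (ι → R)} (hs : s ⊆ C)
    (hTs : ∀ j, T (Pi.single j 1) ∈ s) : C = Submodule.span R s := by
  refine le_antisymm ?_ (Submodule.span_le.mpr hs)
  rw [← hT.range, LinearMap.range_eq_map, ← (Pi.basisFun R ι).span_eq, Submodule.map_span]
  refine Submodule.span_mono ?_
  rintro _ ⟨_, ⟨j, rfl⟩, rfl⟩
  simpa using hTs j

theorem stmt_0_general (F : Type) [Field F] (n : ℕ) [NeZero n]
    (hchar : ¬ (ringChar F ∣ n))
    (C : Submodule (Polynomial F) (Fin n → Polynomial F))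
    (hsummand : ∃ D : Submodule (Polynomial F) (Fin n → Polynomial F), IsCompl C D)
    (hshift : ∀ v ∈ C, (fun i : Fin n => v (i - 1)) ∈ C) :
    C = Submodule.span (Polynomial F)
      {v : Fin n → Polynomial F | v ∈ C ∧ ∀ i : Fin n, ∃ a : F, v i = Polynomial.C a} := by
  obtain ⟨D, hCD⟩ := hsummand
  have hn : IsUnit (Fintype.card (Multiplicative (Fin n)) : F[X]) := by
    rw [Fintype.card_multiplicative, Fintype.card_fin, ← map_natCast Polynomial.C]
    exact isUnit_C.mpr (Ne.isUnit fun h => hchar ((CharP.cast_eq_zero_iff F _ n).mp h))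
  obtain ⟨T, hT, hTcomm⟩ := Representation.exists_isProj_forall_commute _ hn
    (Representation.le_comap_translation_of_shift hshift)
    ⟨C.projection_apply_mem hCD, fun v hv => C.projection_apply_left hCD ⟨v, hv⟩⟩
  have hcirc := Representation.toMatrix'_eq_circulant hTcomm
  have hconst := Matrix.circulant_apply_eq_C_of_isIdempotentElem
    (hcirc ▸ hT.isIdempotentElem.map LinearMap.toMatrixAlgEquiv')
  refine hT.eq_span_of_apply_single_mem (fun v hv => hv.1) fun j => ⟨hT.map_mem _, fun i => ?_⟩
  rw [← LinearMap.toMatrix'_apply, hcirc, Matrix.circulant_apply]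
  exact ⟨_, hconst (i - j)⟩

/-- If F is a finite field whose characteristic does not divide n, and C is a
direct summand of F[z]^n invariant under the cyclic shift applied coefficientwise, then C is
generated as an F[z]-module by its constant vectors (C ∩ F^n). -/
theorem stmt_0 (F : Type) [Field F] [Fintype F] (n : ℕ) [NeZero n]
    (hchar : ¬ (ringChar F ∣ n))
    (C : Submodule (Polynomial F) (Fin n → Polynomial F))
    (hsummand : ∃ D : Submodule (Polynomial F) (Fin n → Polynomial F), IsCompl C D)
    (hshift : ∀ v ∈ C, (fun i : Fin n => v (i - 1)) ∈ C) :
    C = Submodule.span (Polynomial F)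
      {v : Fin n → Polynomial F | v ∈ C ∧ ∀ i : Fin n, ∃ a : F, v i = Polynomial.C a} :=
  stmt_0_general F n hchar C hsummand hshift
end

section
/- A submodule V of F[z]^n is a direct summand if and only if for all v ∈ F[z]^n and all nonzero λ ∈ F[z], λv ∈ V implies v ∈ V. -/
/-- A submodule V of F[z]^n is a direct summand iff for all v ∈ F[z]^n and
all nonzero λ ∈ F[z], λv ∈ V implies v ∈ V. -/
theorem stmt_2 (F : Type) [Field F] (n : ℕ)
    (V : Submodule (Polynomial F) (Fin n → Polynomial F)) :
    (∃ D : Submodule (Polynomial F) (Fin n → Polynomial F), IsCompl V D) ↔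
      ∀ (v : Fin n → Polynomial F) (lam : Polynomial F), lam ≠ 0 → lam • v ∈ V → v ∈ V := by
  constructor
  · rintro ⟨D, hD⟩ v lam hlam hv
    obtain ⟨a, b, hab, -⟩ := Submodule.existsUnique_add_of_isCompl hD v
    have hb : lam • (b : Fin n → Polynomial F) ∈ V := by
      have : lam • v - lam • (a : Fin n → Polynomial F) ∈ V := by
        exact V.sub_mem hv (V.smul_mem _ a.2)
      simpa [← hab, smul_add] using this
    have hbD : lam • (b : Fin n → Polynomial F) ∈ D := D.smul_mem _ b.2
    have : lam • (b : Fin n → Polynomial F) ∈ V ⊓ D := ⟨hb, hbD⟩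
    rw [hD.inf_eq_bot, Submodule.mem_bot] at this
    have hb0 : (b : Fin n → Polynomial F) = 0 := by
      rcases smul_eq_zero.mp this with h | h
      · exact absurd h hlam
      · exact h
    rw [← hab, hb0, add_zero]
    exact a.2
  · intro h
    -- The quotient is torsion-free, hence free over the PID F[z], hence projective.
    haveI : NoZeroSMulDivisors (Polynomial F) ((Fin n → Polynomial F) ⧸ V) := by
      constructor
      intro lam x hx
      by_cases hlam : lam = 0
      · exact Or.inl hlam
      · right
        obtain ⟨v, rfl⟩ := V.mkQ_surjective x
        have : lam • v ∈ V := by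
          have hx' : V.mkQ (lam • v) = 0 := by rw [map_smul]; exact hx
          rwa [Submodule.mkQ_apply, Submodule.Quotient.mk_eq_zero] at hx'
        have := h v lam hlam this
        simpa [Submodule.Quotient.mk_eq_zero] using this
    haveI : Module.Finite (Polynomial F) ((Fin n → Polynomial F) ⧸ V) :=
      Module.Finite.quotient _ _
    haveI : Module.Free (Polynomial F) ((Fin n → Polynomial F) ⧸ V) :=
      Module.free_of_finite_type_torsion_free'
    obtain ⟨s, hs⟩ := Module.projective_lifting_property V.mkQ LinearMap.id V.mkQ_surjective
    -- projection onto V : id - s ∘ mkQ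
    let f : (Fin n → Polynomial F) →ₗ[Polynomial F] (Fin n → Polynomial F) :=
      LinearMap.id - s ∘ₗ V.mkQ
    have hfV : ∀ x, f x ∈ V := by
      intro x
      rw [← Submodule.Quotient.mk_eq_zero]
      have : V.mkQ (f x) = 0 := by
        simp only [f, LinearMap.sub_apply, LinearMap.id_apply, LinearMap.comp_apply, map_sub]
        have := congrArg (fun g => g (V.mkQ x)) hs
        simp only [LinearMap.comp_apply, LinearMap.id_apply] at this
        rw [this, sub_self]
      simpa using this
    let f' : (Fin n → Polynomial F) →ₗ[Polynomial F] V := LinearMap.codRestrict V f hfV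
    have hf' : ∀ x : V, f' x = x := by
      intro x
      ext
      simp only [f', f, LinearMap.codRestrict_apply, LinearMap.sub_apply, LinearMap.id_apply,
        LinearMap.comp_apply]
      have : V.mkQ (x : Fin n → Polynomial F) = 0 := by
        simp [Submodule.Quotient.mk_eq_zero, x.2]
      rw [this, map_zero, sub_zero]
    exact ⟨LinearMap.ker f', LinearMap.isCompl_of_proj hf'⟩
end

section
/- Let A be a product of fields with primitive idempotents e_1,...,e_r, σ ∈ Aut_F(A), and R = A[z;σ] the skew polynomial ring with a*z = z*σ(a). Then for f,g ∈ R and any k: f·e_k·g = 0 implies f·e_k = 0 or e_k·g = 0. -/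
/-!
The coefficients of `f·e` are `fₙ e` and those of `e·g` are `σⁿ(e) gₙ`, so, `e` being idempotent,
`(f·e)·g = (f·e)·(e·g)`. If both factors are nonzero, the top coefficient of this product is
`σ^μ(a) b` with `a = lc(f·e) ∈ eA` and `b = lc(e·g) ∈ σ^μ(e)A`, both nonzero. Since `eA = Kₖ` is a
field and the automorphism `σ^μ` carries `eA` onto `σ^μ(e)A`, the latter has no zero divisors,
so `σ^μ(a) b ≠ 0`.
-/

open Polynomial

/-- The skew multiplication on A[z]: a*z = z*σ(a). -/
noncomputable def skewMul {F A : Type*} [CommRing F] [CommRing A] [Algebra F A]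
    (σ : A ≃ₐ[F] A) (g h : Polynomial A) : Polynomial A :=
  ∑ ν ∈ g.support, ∑ μ ∈ h.support,
    Polynomial.monomial (ν + μ) ((σ ^ μ) (g.coeff ν) * h.coeff μ)

/-- The corner ring `eA` has no zero divisors. -/
def IsCornerDomain {A : Type*} [Mul A] [Zero A] (e : A) : Prop :=
  ∀ x y : A, e * x * (e * y) = 0 → e * x = 0 ∨ e * y = 0

theorem IsCornerDomain.map {A B : Type*} [MulZeroClass A] [MulZeroClass B] {e : A}
    (he : IsCornerDomain e) (τ : A ≃* B) : IsCornerDomain (τ e) := by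
  intro x y hxy
  have hpre : e * τ.symm x * (e * τ.symm y) = 0 :=
    τ.injective (by simpa only [map_mul, τ.apply_symm_apply, map_zero] using hxy)
  refine (he _ _ hpre).imp (fun h => ?_) (fun h => ?_) <;>
    simpa only [map_mul, τ.apply_symm_apply, map_zero] using congrArg τ h

theorem Pi.isCornerDomain_single_one {ι : Type*} [DecidableEq ι] {K : ι → Type*}
    [∀ i, MulZeroOneClass (K i)] [∀ i, NoZeroDivisors (K i)] (i : ι) :
    IsCornerDomain (Pi.single i 1 : ∀ i, K i) := by
  have single_one_mul (z : ∀ i, K i) : Pi.single i 1 * z = Pi.single i (z i) := by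
    rw [← Pi.single_mul_left, one_mul]
  intro x y hxy
  rw [single_one_mul, single_one_mul, ← Pi.single_mul, Pi.single_eq_zero_iff] at hxy
  simpa only [single_one_mul, Pi.single_eq_zero_iff] using mul_eq_zero.mp hxy

section SkewPolynomial

open Finset.HasAntidiagonal

variable {F A : Type*} [CommRing F] [CommRing A] [Algebra F A] (σ : A ≃ₐ[F] A)

theorem coeff_skewMul (p q : A[X]) (n : ℕ) :
    (skewMul σ p q).coeff n =
      ∑ x ∈ antidiagonal n, (σ ^ x.2) (p.coeff x.1) * q.coeff x.2 := by
  simp only [skewMul, finsetSum_coeff, coeff_monomial]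
  rw [← Finset.sum_product', ← Finset.sum_filter]
  apply Finset.sum_subset
  · intro x hx
    simpa [mem_antidiagonal] using (Finset.mem_filter.mp hx).2
  · intro x hx hx'
    simp only [mem_antidiagonal] at hx
    simp only [Finset.mem_filter, Finset.mem_product, hx, and_true, not_and_or,
      mem_support_iff, not_not] at hx'
    rcases hx' with hp | hq
    · rw [hp, map_zero, zero_mul]
    · rw [hq, mul_zero]

theorem coeff_skewMul_C (p : A[X]) (a : A) (n : ℕ) :
    (skewMul σ p (C a)).coeff n = p.coeff n * a := by
  rw [coeff_skewMul, Finset.sum_eq_single (n, 0)]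
  · simp
  · rintro ⟨i, j⟩ hij hne
    rcases eq_or_ne j 0 with rfl | hj
    · simp_all
    · rw [coeff_C, if_neg hj, mul_zero]
  · simp

theorem coeff_C_skewMul (a : A) (q : A[X]) (n : ℕ) :
    (skewMul σ (C a) q).coeff n = (σ ^ n) a * q.coeff n := by
  rw [coeff_skewMul, Finset.sum_eq_single (0, n)]
  · simp
  · rintro ⟨i, j⟩ hij hne
    rcases eq_or_ne i 0 with rfl | hi
    · simp_all
    · rw [coeff_C, if_neg hi, map_zero, zero_mul]
  · simp

theorem coeff_skewMul_natDegree_add_natDegree (p q : A[X]) :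
    (skewMul σ p q).coeff (p.natDegree + q.natDegree) =
      (σ ^ q.natDegree) p.leadingCoeff * q.leadingCoeff := by
  rw [coeff_skewMul, Finset.sum_eq_single (p.natDegree, q.natDegree)]
  · rfl
  · rintro ⟨i, j⟩ hij hne
    rw [mem_antidiagonal] at hij
    rcases lt_or_ge p.natDegree i with hi | hi
    · rw [coeff_eq_zero_of_natDegree_lt hi, map_zero, zero_mul]
    · have hj : q.natDegree < j := by
        by_contra! hj
        exact hne (Prod.ext (by omega) (by omega))
      rw [coeff_eq_zero_of_natDegree_lt hj, mul_zero]
  · simp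

theorem skewMul_skewMul_C_eq_of_isIdempotentElem (f g : A[X]) {e : A}
    (he : IsIdempotentElem e) :
    skewMul σ (skewMul σ f (C e)) g = skewMul σ (skewMul σ f (C e)) (skewMul σ (C e) g) := by
  ext n
  rw [coeff_skewMul, coeff_skewMul]
  refine Finset.sum_congr rfl fun x _ => ?_
  rw [coeff_skewMul_C, coeff_C_skewMul, map_mul]
  linear_combination (-(σ ^ x.2) (f.coeff x.1) * g.coeff x.2) * (he.map (σ ^ x.2)).eq

end SkewPolynomial

/-- in R = A[z;σ] over a product of fields A, f·e_k·g = 0 implies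
f·e_k = 0 or e_k·g = 0, where e_k is a primitive idempotent. -/
theorem stmt_7 (F : Type) [Field F] (r : ℕ) (K : Fin r → Type)
    [∀ k, Field (K k)] [∀ k, Algebra F (K k)]
    (σ : (∀ k, K k) ≃ₐ[F] (∀ k, K k))
    (f g : Polynomial (∀ k, K k)) (k : Fin r)
    (h : skewMul σ (skewMul σ f (Polynomial.C (Pi.single k 1))) g = 0) :
    skewMul σ f (Polynomial.C (Pi.single k 1)) = 0 ∨
      skewMul σ (Polynomial.C (Pi.single k 1)) g = 0 := by
  set e : ∀ k, K k := Pi.single k 1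
  by_contra! ⟨hfe, heg⟩
  set μ := (skewMul σ (C e) g).natDegree
  have hcorner : IsCornerDomain ((σ ^ μ) e) :=
    (Pi.isCornerDomain_single_one k).map (σ ^ μ).toMulEquiv
  have he : IsIdempotentElem e := by simp [e, IsIdempotentElem, ← Pi.single_mul]
  rw [skewMul_skewMul_C_eq_of_isIdempotentElem σ f g he] at h
  have htop : (skewMul σ (skewMul σ f (C e)) (skewMul σ (C e) g)).coeff
      ((skewMul σ f (C e)).natDegree + μ) = 0 := by
    rw [h, coeff_zero]
  rw [coeff_skewMul_natDegree_add_natDegree] at htop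
  have hlc_fe := leadingCoeff_ne_zero.mpr hfe
  have hlc_eg := leadingCoeff_ne_zero.mpr heg
  rw [leadingCoeff, coeff_skewMul_C] at hlc_fe htop
  rw [leadingCoeff, coeff_C_skewMul] at hlc_eg htop
  rw [map_mul, mul_comm ((σ ^ μ) (f.coeff _)) ((σ ^ μ) e)] at htop
  rcases hcorner _ _ htop with h0 | h0
  · exact hlc_fe ((σ ^ μ).injective (by rw [map_mul, mul_comm, h0, map_zero]))
  · exact hlc_eg h0
end

section
/- Let σ ∈ Aut_F(A) where A = F[x]/(x^n−1), char(F) ∤ n, and write a = σ(x). Then the constant coefficient of a^i is zero for every i with 1 ≤ i ≤ n−1. (Proof idea: M_{a^i} has characteristic polynomial (X^{n~}−1)^d where d = gcd(i,n), n~ = n/d, so its trace is 0, and trace(M_{a^i}) = n·[a^i]_0.) -/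
/-!
Multiplication by `x` permutes the monomial basis `1, x, …, x^(n-1)` of `F[x]/(x^n - 1)`
cyclically, so `Tr(x^k) = n · [k = 0]` for `k < n` and, by linearity, `Tr(f) = n · [f]₀`.
The trace is invariant under the automorphism `σ`, hence
`n · [σ(x)^i]₀ = Tr(σ(x^i)) = Tr(x^i) = 0`, and `n` is invertible in `F`.
-/

open Polynomial

/-- A = F[x]/(x^n − 1). -/
abbrev Amod (F : Type) [Field F] (n : ℕ) : Type :=
  Polynomial F ⧸ (Ideal.span {Polynomial.X ^ n - 1} : Ideal (Polynomial F))

/-- the class of x in A. -/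
noncomputable def xbar (F : Type) [Field F] (n : ℕ) : Amod F n :=
  Ideal.Quotient.mk _ Polynomial.X

theorem Nat.add_mod_eq_right_iff_eq_zero {n k j : ℕ} (hk : k < n) (hj : j < n) :
    (k + j) % n = j ↔ k = 0 := by
  rcases lt_or_ge (k + j) n with h | h
  · rw [Nat.mod_eq_of_lt h]; omega
  · rw [Nat.mod_eq_sub_mod h, Nat.mod_eq_of_lt (by omega)]; omega

namespace Polynomial

variable {R : Type*} [Ring R] {n : ℕ}

theorem monic_X_pow_sub_one (hn : n ≠ 0) : (X ^ n - 1 : R[X]).Monic := by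
  simpa using monic_X_pow_sub_C (1 : R) hn

theorem natDegree_X_pow_sub_one [Nontrivial R] : (X ^ n - 1 : R[X]).natDegree = n := by
  simpa using natDegree_X_pow_sub_C (n := n) (r := (1 : R))

theorem natDegree_modByMonic_X_pow_sub_one_lt [Nontrivial R] (hn : n ≠ 0) (q : R[X]) :
    (q %ₘ (X ^ n - 1)).natDegree < n := by
  have hne : (X ^ n - 1 : R[X]) ≠ 1 := fun h => hn <| by
    simpa [h] using (natDegree_X_pow_sub_one (R := R) (n := n)).symm
  simpa only [natDegree_X_pow_sub_one] using
    natDegree_modByMonic_lt q (monic_X_pow_sub_one hn) hne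

end Polynomial

namespace AdjoinRoot

variable {R : Type*} [CommRing R] {n : ℕ}

theorem root_X_pow_sub_one_pow_eq_pow_mod (m : ℕ) :
    root (X ^ n - 1 : R[X]) ^ m = root (X ^ n - 1 : R[X]) ^ (m % n) := by
  refine pow_eq_pow_mod m (sub_eq_zero.mp ?_)
  rw [← mk_X, ← map_pow, ← map_one (mk _), ← map_sub, mk_self]

variable [Nontrivial R]

theorem trace_root_X_pow_sub_one_pow (hn : n ≠ 0) {k : ℕ} (hk : k < n) :
    Algebra.trace R (AdjoinRoot (X ^ n - 1 : R[X])) (root _ ^ k) =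
      if k = 0 then (n : R) else 0 := by
  let pb := powerBasis' (monic_X_pow_sub_one (R := R) hn)
  have hdim : pb.dim = n := natDegree_X_pow_sub_one
  have hdiag (j : Fin pb.dim) :
      Algebra.leftMulMatrix pb.basis (root _ ^ k) j j = if k = 0 then 1 else 0 := by
    have hj : (j : ℕ) < n := j.isLt.trans_eq hdim
    have hshift : root (X ^ n - 1 : R[X]) ^ k * pb.basis j =
        pb.basis ⟨(k + j) % n, (Nat.mod_lt _ (Nat.pos_of_ne_zero hn)).trans_eq hdim.symm⟩ := by
      rw [pb.basis_eq_pow, pb.basis_eq_pow, powerBasis'_gen, ← pow_add,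
        root_X_pow_sub_one_pow_eq_pow_mod]
    rw [Algebra.leftMulMatrix_eq_repr_mul, hshift, pb.basis.repr_self, Finsupp.single_apply]
    simp only [Fin.ext_iff, Nat.add_mod_eq_right_iff_eq_zero hk hj]
  rw [Algebra.trace_eq_matrix_trace pb.basis, Matrix.trace]
  simp only [Matrix.diag_apply, hdiag, Finset.sum_const, Finset.card_univ, Fintype.card_fin, hdim]
  split_ifs <;> simp

theorem trace_mk_X_pow_sub_one (hn : n ≠ 0) (q : R[X]) :
    Algebra.trace R (AdjoinRoot (X ^ n - 1 : R[X])) (mk _ q) =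
      n * (q %ₘ (X ^ n - 1)).coeff 0 := by
  rw [← mk_leftInverse (monic_X_pow_sub_one hn) (mk _ q), modByMonicHom_mk, ← aeval_eq,
    aeval_eq_sum_range' (natDegree_modByMonic_X_pow_sub_one_lt hn q), map_sum,
    Finset.sum_eq_single 0]
  · rw [map_smul, trace_root_X_pow_sub_one_pow hn (Nat.pos_of_ne_zero hn), if_pos rfl,
      smul_eq_mul, mul_comm]
  · intro k hk hk0
    rw [map_smul, trace_root_X_pow_sub_one_pow hn (Finset.mem_range.mp hk), if_neg hk0, smul_zero]
  · simp [Nat.pos_of_ne_zero hn]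

end AdjoinRoot

theorem stmt_16_general (F : Type) [Field F] (n : ℕ)
    (hchar : ¬ (ringChar F ∣ n))
    (σ : Amod F n ≃ₐ[F] Amod F n) (i : ℕ) (h1 : 1 ≤ i) (h2 : i ≤ n - 1)
    (p : Polynomial F)
    (hp : Ideal.Quotient.mk (Ideal.span {Polynomial.X ^ n - 1} : Ideal (Polynomial F)) p
        = (σ (xbar F n)) ^ i) :
    (p %ₘ (Polynomial.X ^ n - 1)).coeff 0 = 0 := by
  have hn : n ≠ 0 := by omega
  -- `Amod F n` unfolds to `AdjoinRoot (X ^ n - 1)`, and `xbar F n` to its `root`.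
  have htrace : (n : F) * (p %ₘ (X ^ n - 1)).coeff 0 = 0 := calc
    _ = Algebra.trace F (Amod F n) (σ (xbar F n ^ i)) := by
      rw [← AdjoinRoot.trace_mk_X_pow_sub_one hn, map_pow, ← hp]; rfl
    _ = Algebra.trace F (AdjoinRoot (X ^ n - 1 : F[X])) (AdjoinRoot.root _ ^ i) :=
      Algebra.trace_eq_of_algEquiv σ _
    _ = 0 := (AdjoinRoot.trace_root_X_pow_sub_one_pow hn (by omega)).trans (if_neg (by omega))
  exact (mul_eq_zero.mp htrace).resolve_left fun h => hchar (ringChar.dvd h)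

/-- with a = σ(x), the constant coefficient of a^i is zero for 1 ≤ i ≤ n−1,
where the coefficients are read off from the canonical representative of degree < n. -/
theorem stmt_16 (F : Type) [Field F] (n : ℕ) (hn : 0 < n)
    (hchar : ¬ (ringChar F ∣ n))
    (σ : Amod F n ≃ₐ[F] Amod F n) (i : ℕ) (h1 : 1 ≤ i) (h2 : i ≤ n - 1)
    (p : Polynomial F)
    (hp : Ideal.Quotient.mk (Ideal.span {Polynomial.X ^ n - 1} : Ideal (Polynomial F)) p
        = (σ (xbar F n)) ^ i) :
    (p %ₘ (Polynomial.X ^ n - 1)).coeff 0 = 0 :=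
  stmt_16_general F n hchar σ i h1 h2 p hp
end

section
/- Define the σ-circulant of g = Σ_ν z^ν g_ν ∈ A[z;σ] as M^σ(g) := Σ_ν z^ν P_σ^ν M_{g_ν} ∈ F[z]^{n×n}. Then M^σ(g)·M^σ(h) = M^σ(g*h) for all g,h ∈ A[z;σ], and g ↦ M^σ(g) is an injective F-algebra homomorphism; moreover p(u·M^σ(g)) = p(u)*g for all u ∈ F[z]^n, where p is the polynomial identification F[z]^n ≅ A[z]. -/
open Polynomial

/-- the element of A with coefficient vector w with respect to the basis 1,x,...,x^{n−1}. -/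
noncomputable def rep (F : Type) [Field F] (n : ℕ) (w : Fin n → F) : Amod F n :=
  ∑ j : Fin n, algebraMap F (Amod F n) (w j) * xbar F n ^ (j : ℕ)

/-- The coefficientwise identification p : F[z]^n → A[z]. -/
noncomputable def pId (F : Type) [Field F] (n : ℕ) (v : Fin n → Polynomial F) :
    Polynomial (Amod F n) :=
  ∑ i : Fin n, Polynomial.C (xbar F n ^ (i : ℕ)) * (v i).map (algebraMap F (Amod F n))

/-- the σ-circulant M^σ(g) = Σ_ν z^ν P_σ^ν M_{g_ν}, built from the matrix P of σ and the
classical circulants Mc. -/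
noncomputable def Msig (F : Type) [Field F] (n : ℕ)
    (P : Matrix (Fin n) (Fin n) F) (Mc : Amod F n → Matrix (Fin n) (Fin n) F)
    (g : Polynomial (Amod F n)) : Matrix (Fin n) (Fin n) (Polynomial F) :=
  fun i j => ∑ ν ∈ g.support, Polynomial.monomial ν ((P ^ ν * Mc (g.coeff ν)) i j)

/-! Read the rows of an `n × n` matrix over `F` as elements of `A` via `rep`. Then `w ↦ w M_a`
is multiplication by `a` and `w ↦ w P_σ` is `σ`, so `a ↦ M_a` is the regular representation of
`A` and `M_a P_σ^d = P_σ^d M_{σ^d(a)}`, the matrix form of the skew relation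
`a z^d = z^d σ^d(a)`. Comparing `z`-coefficients (through `matPolyEquiv`) turns the product of
two σ-circulants into the σ-circulant of the skew product, and the same computation with a row
vector `u` gives `p(u M^σ(g)) = p(u) * g`. Injectivity holds because the first row of
`P_σ^d M_a` represents `a`. -/

namespace SigmaCirculant

open Matrix Finset.HasAntidiagonal

variable {F : Type} [Field F] {n : ℕ}

section Rep

theorem rep_eq_linearCombination :
    rep F n = Fintype.linearCombination F (fun j : Fin n => xbar F n ^ (j : ℕ)) := by
  funext w
  rw [Fintype.linearCombination_apply, rep]
  -- the quotient's `F`-module structure is the algebra one only up to unfolding, so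
  -- `Algebra.smul_def` is applied by `exact` rather than `rw`
  exact Finset.sum_congr rfl fun j _ => (Algebra.smul_def _ _).symm

theorem linearIndependent_xbar_pow (hn : 0 < n) :
    LinearIndependent F (fun j : Fin n => xbar F n ^ (j : ℕ)) := by
  have hmonic : (X ^ n - 1 : F[X]).Monic := monic_X_pow_sub_C 1 hn.ne'
  set pb := AdjoinRoot.powerBasis' hmonic
  have hdim : pb.dim = n := natDegree_X_pow_sub_C
  have hli := pb.basis.linearIndependent
  rw [pb.coe_basis] at hli
  exact hli.comp (Fin.cast hdim.symm) (Fin.cast_injective _)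

theorem rep_injective (hn : 0 < n) : Function.Injective (rep F n) := by
  rw [rep_eq_linearCombination]
  exact (linearIndependent_xbar_pow hn).fintypeLinearCombination_injective

theorem rep_single_one (i : Fin n) : rep F n (Pi.single i 1) = xbar F n ^ (i : ℕ) := by
  rw [rep_eq_linearCombination, Fintype.linearCombination_apply_single, one_smul]

theorem rep_vecMul (w : Fin n → F) (M : Matrix (Fin n) (Fin n) F) :
    rep F n (w ᵥ* M) = ∑ i, w i • rep F n (M i) := by
  rw [vecMul_eq_sum, rep_eq_linearCombination, map_sum]
  simp only [map_smul]

theorem matrix_ext_rep_vecMul (hn : 0 < n) {M N : Matrix (Fin n) (Fin n) F}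
    (h : ∀ w, rep F n (w ᵥ* M) = rep F n (w ᵥ* N)) : M = N := by
  funext i
  have hi := h (Pi.single i 1)
  rw [single_one_vecMul, single_one_vecMul] at hi
  exact rep_injective hn hi

end Rep

theorem skewMul_coeff {R A : Type*} [CommRing R] [CommRing A] [Algebra R A] (σ : A ≃ₐ[R] A)
    (g h : A[X]) (d : ℕ) :
    (skewMul σ g h).coeff d =
      ∑ p ∈ antidiagonal d, (σ ^ p.2) (g.coeff p.1) * h.coeff p.2 := by
  classical
  simp only [skewMul, finsetSum_coeff, coeff_monomial]
  rw [← Finset.sum_product', ← Finset.sum_filter]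
  refine Finset.sum_subset (fun p hp => mem_antidiagonal.mpr (Finset.mem_filter.mp hp).2)
    fun p hpd hp => ?_
  simp only [Finset.mem_filter, Finset.mem_product, mem_support_iff,
    mem_antidiagonal.mp hpd, and_true, not_and_or, not_not] at hp
  rcases hp with hg | hh
  · rw [hg, map_zero, zero_mul]
  · rw [hh, mul_zero]

theorem coeff_vecMul {R m : Type*} [CommSemiring R] [Fintype m] [DecidableEq m]
    (u : m → R[X]) (M : Matrix m m R[X]) (d : ℕ) :
    (fun j => (u ᵥ* M) j |>.coeff d) =
      ∑ p ∈ antidiagonal d, (fun k => (u k).coeff p.1) ᵥ* (matPolyEquiv M).coeff p.2 := by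
  funext j
  simp only [Finset.sum_apply, vecMul, dotProduct, finsetSum_coeff, coeff_mul,
    matPolyEquiv_coeff_apply]
  exact Finset.sum_comm

theorem pId_coeff (v : Fin n → F[X]) (d : ℕ) :
    (pId F n v).coeff d = rep F n (fun i => (v i).coeff d) := by
  rw [pId, finsetSum_coeff, rep]
  refine Finset.sum_congr rfl fun i _ => ?_
  rw [coeff_C_mul, coeff_map, mul_comm]

theorem coeff_matPolyEquiv_Msig {P : Matrix (Fin n) (Fin n) F}
    {Mc : Amod F n → Matrix (Fin n) (Fin n) F} (hMc : Mc 0 = 0) (g : (Amod F n)[X]) (d : ℕ) :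
    (matPolyEquiv (Msig F n P Mc g)).coeff d = P ^ d * Mc (g.coeff d) := by
  ext i j
  simp only [matPolyEquiv_coeff_apply, Msig, finsetSum_coeff, coeff_monomial,
    Finset.sum_ite_eq']
  split_ifs with hd
  · rfl
  · rw [notMem_support_iff.mp hd, hMc, mul_zero]
    rfl

section Msig

variable {σ : Amod F n ≃ₐ[F] Amod F n} {P : Matrix (Fin n) (Fin n) F}

theorem Msig_skewMul {Mc : Amod F n →ₐ[F] Matrix (Fin n) (Fin n) F}
    (hcomm : ∀ (d : ℕ) (a : Amod F n), Mc a * P ^ d = P ^ d * Mc ((σ ^ d) a))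
    (g h : (Amod F n)[X]) :
    Msig F n P Mc (skewMul σ g h) = Msig F n P Mc g * Msig F n P Mc h := by
  apply matPolyEquiv.injective
  ext d : 1
  rw [map_mul, coeff_mul, coeff_matPolyEquiv_Msig (map_zero Mc), skewMul_coeff, map_sum,
    Finset.mul_sum]
  refine Finset.sum_congr rfl fun p hp => ?_
  rw [coeff_matPolyEquiv_Msig (map_zero Mc), coeff_matPolyEquiv_Msig (map_zero Mc),
    ← mem_antidiagonal.mp hp, pow_add, map_mul]
  calc P ^ p.1 * P ^ p.2 * (Mc ((σ ^ p.2) (g.coeff p.1)) * Mc (h.coeff p.2))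
      = P ^ p.1 * (P ^ p.2 * Mc ((σ ^ p.2) (g.coeff p.1))) * Mc (h.coeff p.2) := by
        simp only [mul_assoc]
    _ = P ^ p.1 * Mc (g.coeff p.1) * (P ^ p.2 * Mc (h.coeff p.2)) := by
        rw [← hcomm]; simp only [mul_assoc]

theorem Msig_add (Mc : Amod F n →ₐ[F] Matrix (Fin n) (Fin n) F) (g h : (Amod F n)[X]) :
    Msig F n P Mc (g + h) = Msig F n P Mc g + Msig F n P Mc h := by
  apply matPolyEquiv.injective
  ext d : 1
  simp only [map_add, coeff_add, coeff_matPolyEquiv_Msig (map_zero Mc), mul_add]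

theorem Msig_smul (Mc : Amod F n →ₐ[F] Matrix (Fin n) (Fin n) F) (c : F) (g : (Amod F n)[X]) :
    Msig F n P Mc (c • g) = c • Msig F n P Mc g := by
  apply matPolyEquiv.injective
  ext d : 1
  simp only [map_smul, coeff_smul, coeff_matPolyEquiv_Msig (map_zero Mc), mul_smul_comm]

theorem Msig_one (Mc : Amod F n →ₐ[F] Matrix (Fin n) (Fin n) F) : Msig F n P Mc 1 = 1 := by
  apply matPolyEquiv.injective
  ext d : 1
  rw [map_one, coeff_matPolyEquiv_Msig (map_zero Mc), coeff_one, coeff_one]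
  split_ifs with hd
  · rw [hd, pow_zero, one_mul, map_one]
  · rw [map_zero, mul_zero]

end Msig

section Representation

variable {σ : Amod F n ≃ₐ[F] Amod F n} {P : Matrix (Fin n) (Fin n) F}
  {Mc : Amod F n → Matrix (Fin n) (Fin n) F} (hn : 0 < n)
  (hP : ∀ i : Fin n, rep F n (P i) = σ (xbar F n ^ (i : ℕ)))
  (hMc : ∀ (a : Amod F n) (i : Fin n), rep F n (Mc a i) = xbar F n ^ (i : ℕ) * a)

include hMc in
theorem rep_vecMul_circulant (w : Fin n → F) (a : Amod F n) :
    rep F n (w ᵥ* Mc a) = rep F n w * a := by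
  simp only [rep_vecMul, hMc, rep_eq_linearCombination, Fintype.linearCombination_apply,
    Finset.sum_mul, smul_mul_assoc]

include hn hMc in
def circulantAlgHom : Amod F n →ₐ[F] Matrix (Fin n) (Fin n) F where
  toFun := Mc
  map_one' := matrix_ext_rep_vecMul hn fun w => by
    rw [rep_vecMul_circulant hMc, mul_one, vecMul_one]
  map_mul' a b := matrix_ext_rep_vecMul hn fun w => by
    rw [rep_vecMul_circulant hMc, ← vecMul_vecMul, rep_vecMul_circulant hMc,
      rep_vecMul_circulant hMc, mul_assoc]
  map_zero' := matrix_ext_rep_vecMul hn fun w => by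
    rw [rep_vecMul_circulant hMc, mul_zero, vecMul_zero, rep_eq_linearCombination, map_zero]
  map_add' a b := matrix_ext_rep_vecMul hn fun w => by
    rw [rep_vecMul_circulant hMc, vecMul_add, rep_eq_linearCombination, map_add,
      ← rep_eq_linearCombination, rep_vecMul_circulant hMc, rep_vecMul_circulant hMc, mul_add]
  commutes' c := matrix_ext_rep_vecMul hn fun w => by
    rw [rep_vecMul_circulant hMc, Algebra.algebraMap_eq_smul_one (A := Matrix _ _ F) c,
      vecMul_smul, vecMul_one, rep_eq_linearCombination, map_smul]
    exact (mul_comm _ _).trans (Algebra.smul_def _ _).symm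

include hP in
theorem rep_vecMul_P (w : Fin n → F) : rep F n (w ᵥ* P) = σ (rep F n w) := by
  simp only [rep_vecMul, hP, rep_eq_linearCombination, Fintype.linearCombination_apply, map_sum,
    map_smul]

include hP in
theorem rep_vecMul_P_pow (d : ℕ) (w : Fin n → F) :
    rep F n (w ᵥ* P ^ d) = (σ ^ d) (rep F n w) := by
  induction d generalizing w with
  | zero => rw [pow_zero, pow_zero, vecMul_one, AlgEquiv.one_apply]
  | succ d ih =>
    rw [pow_succ, ← vecMul_vecMul, rep_vecMul_P hP, ih, pow_succ', AlgEquiv.mul_apply]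

include hP hMc in
theorem rep_vecMul_P_pow_mul_circulant (d : ℕ) (w : Fin n → F) (a : Amod F n) :
    rep F n (w ᵥ* (P ^ d * Mc a)) = (σ ^ d) (rep F n w) * a := by
  rw [← vecMul_vecMul, rep_vecMul_circulant hMc, rep_vecMul_P_pow hP]

include hn hP hMc in
theorem circulant_mul_P_pow (d : ℕ) (a : Amod F n) : Mc a * P ^ d = P ^ d * Mc ((σ ^ d) a) :=
  matrix_ext_rep_vecMul hn fun w => by
    rw [rep_vecMul_P_pow_mul_circulant hP hMc, ← vecMul_vecMul, rep_vecMul_P_pow hP,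
      rep_vecMul_circulant hMc, map_mul]

include hn hP hMc in
theorem P_pow_mul_circulant_injective (d : ℕ) : Function.Injective fun a => P ^ d * Mc a := by
  intro a b hab
  have h0 := congrArg (fun M => rep F n (Pi.single ⟨0, hn⟩ 1 ᵥ* M)) hab
  simpa only [rep_vecMul_P_pow_mul_circulant hP hMc, rep_single_one, pow_zero, map_one,
    one_mul] using h0

include hn hP hMc in
theorem Msig_injective : Function.Injective (Msig F n P Mc) := by
  have hMc0 : Mc 0 = 0 := map_zero (circulantAlgHom hn hMc)
  intro g h hgh
  ext d
  have hd := congrArg (fun M => (matPolyEquiv M).coeff d) hgh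
  simp only [coeff_matPolyEquiv_Msig hMc0] at hd
  exact P_pow_mul_circulant_injective hn hP hMc d hd

include hn hP hMc in
theorem pId_vecMul_Msig (u : Fin n → F[X]) (g : (Amod F n)[X]) :
    pId F n (u ᵥ* Msig F n P Mc g) = skewMul σ (pId F n u) g := by
  have hMc0 : Mc 0 = 0 := map_zero (circulantAlgHom hn hMc)
  ext d
  rw [pId_coeff, coeff_vecMul, rep_eq_linearCombination, map_sum, skewMul_coeff]
  refine Finset.sum_congr rfl fun p _ => ?_
  rw [← rep_eq_linearCombination, coeff_matPolyEquiv_Msig hMc0,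
    rep_vecMul_P_pow_mul_circulant hP hMc, pId_coeff]

end Representation

end SigmaCirculant

open SigmaCirculant in
theorem stmt_18_general (F : Type) [Field F] (n : ℕ) (hn : 0 < n)
    (σ : Amod F n ≃ₐ[F] Amod F n)
    (P : Matrix (Fin n) (Fin n) F)
    (hP : ∀ i : Fin n, rep F n (P i) = σ (xbar F n ^ (i : ℕ)))
    (Mc : Amod F n → Matrix (Fin n) (Fin n) F)
    (hMc : ∀ (a : Amod F n) (i : Fin n), rep F n (Mc a i) = xbar F n ^ (i : ℕ) * a) :
    (∀ g h : Polynomial (Amod F n),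
        Msig F n P Mc (skewMul σ g h) = Msig F n P Mc g * Msig F n P Mc h) ∧
    (∀ g h : Polynomial (Amod F n),
        Msig F n P Mc (g + h) = Msig F n P Mc g + Msig F n P Mc h) ∧
    (∀ (c : F) (g : Polynomial (Amod F n)),
        Msig F n P Mc (c • g) = c • Msig F n P Mc g) ∧
    (Msig F n P Mc 1 = 1) ∧
    Function.Injective (Msig F n P Mc) ∧
    (∀ (u : Fin n → Polynomial F) (g : Polynomial (Amod F n)),
        pId F n (Matrix.vecMul u (Msig F n P Mc g)) = skewMul σ (pId F n u) g) :=
  ⟨Msig_skewMul (Mc := circulantAlgHom hn hMc) (circulant_mul_P_pow hn hP hMc),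
    Msig_add (circulantAlgHom hn hMc), Msig_smul (circulantAlgHom hn hMc),
    Msig_one (circulantAlgHom hn hMc), Msig_injective hn hP hMc, pId_vecMul_Msig hn hP hMc⟩

/-- M^σ(g)M^σ(h) = M^σ(g*h), g ↦ M^σ(g) is an injective F-algebra
homomorphism, and p(u·M^σ(g)) = p(u)*g for all u ∈ F[z]^n. -/
theorem stmt_18 (F : Type) [Field F] (n : ℕ) (hn : 0 < n)
    (hchar : ¬ (ringChar F ∣ n))
    (σ : Amod F n ≃ₐ[F] Amod F n)
    (P : Matrix (Fin n) (Fin n) F)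
    (hP : ∀ i : Fin n, rep F n (P i) = σ (xbar F n ^ (i : ℕ)))
    (Mc : Amod F n → Matrix (Fin n) (Fin n) F)
    (hMc : ∀ (a : Amod F n) (i : Fin n), rep F n (Mc a i) = xbar F n ^ (i : ℕ) * a) :
    (∀ g h : Polynomial (Amod F n),
        Msig F n P Mc (skewMul σ g h) = Msig F n P Mc g * Msig F n P Mc h) ∧
    (∀ g h : Polynomial (Amod F n),
        Msig F n P Mc (g + h) = Msig F n P Mc g + Msig F n P Mc h) ∧
    (∀ (c : F) (g : Polynomial (Amod F n)),
        Msig F n P Mc (c • g) = c • Msig F n P Mc g) ∧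
    (Msig F n P Mc 1 = 1) ∧
    Function.Injective (Msig F n P Mc) ∧
    (∀ (u : Fin n → Polynomial F) (g : Polynomial (Amod F n)),
        pId F n (Matrix.vecMul u (Msig F n P Mc g)) = skewMul σ (pId F n u) g) :=
  stmt_18_general F n hn σ P hP Mc hMc
end
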